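/- arXiv:2407.07128 — 2 statements merged into one kernel-verified Lean document; each statement's English description precedes it below -/
import Mathlib

section
/- Let Θ ∈ ℝ^{p×p} be symmetric positive semidefinite, let α > 0, let X ∈ ℝ^{p×n}, and let C ∈ ℝ^{p×k} have full column rank (equivalently, CᵀC is invertible). Then the matrix (2/α)·CᵀΘC + CᵀC is invertible, and X_C* = ((2/α)·CᵀΘC + CᵀC)⁻¹CᵀX is a global minimizer of the function f(X̃) = tr(X̃ᵀCᵀΘCX̃) + (α/2)·‖X − CX̃‖_F² over X̃ ∈ ℝ^{k×n}; that is, f(X_C*) ≤ f(X̃) for all X̃ ∈ ℝ^{k×n}. -/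
/-!
With `B = (2/α)·CᵀΘC + CᵀC`, which is positive definite because `CᵀΘC` is positive semidefinite
and the Gram matrix `CᵀC` is invertible, expanding the Frobenius norm gives
`f(Y) = (α/2)·(tr(YᵀBY) - 2·tr(YᵀCᵀX) + tr(XᵀX))`.
Completing the square around the solution `X* = B⁻¹CᵀX` of `B X* = CᵀX` yields
`f(Y) - f(X*) = (α/2)·tr((Y - X*)ᵀ B (Y - X*)) ≥ 0`.
-/

open Matrix

/-- Frobenius norm of a real matrix. -/
noncomputable def frobNorm {m n : ℕ} (A : Matrix (Fin m) (Fin n) ℝ) : ℝ :=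
  Real.sqrt (∑ i, ∑ j, (A i j) ^ 2)

theorem sq_frobNorm {m n : ℕ} (A : Matrix (Fin m) (Fin n) ℝ) :
    frobNorm A ^ 2 = (Aᵀ * A).trace := by
  rw [frobNorm, Real.sq_sqrt (by positivity), Finset.sum_comm]
  simp only [trace, diag, mul_apply, transpose_apply, sq]

namespace Matrix

variable {m n : Type*} [Fintype m] [Fintype n]

theorem trace_transpose_mul_mul_nonneg {B : Matrix n n ℝ} (hB : B.PosSemidef)
    (D : Matrix n m ℝ) : 0 ≤ (Dᵀ * B * D).trace := by
  simpa using (hB.conjTranspose_mul_mul_same D).trace_nonneg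

theorem posDef_transpose_mul_self_of_isUnit [DecidableEq n] {C : Matrix m n ℝ}
    (hC : IsUnit (Cᵀ * C)) : (Cᵀ * C).PosDef := by
  have hinj : Function.Injective C.mulVec := by
    refine Function.Injective.of_comp (f := Cᵀ.mulVec) ?_
    simpa only [Function.comp_def, mulVec_mulVec] using mulVec_injective_iff_isUnit.mpr hC
  simpa using PosDef.conjTranspose_mul_self C hinj

theorem trace_sub_transpose_mul_mul_sub {R : Type*} [CommRing R] {B : Matrix n n R}
    (hB : B.IsSymm) (Y Z : Matrix n m R) :
    ((Y - Z)ᵀ * B * (Y - Z)).trace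
      = (Yᵀ * B * Y).trace - 2 * (Yᵀ * (B * Z)).trace + (Zᵀ * B * Z).trace := by
  have hsymm : (Zᵀ * (B * Y)).trace = (Yᵀ * (B * Z)).trace := by
    rw [← trace_transpose, transpose_mul, transpose_mul, transpose_transpose, hB.eq,
      Matrix.mul_assoc]
  simp only [transpose_sub, Matrix.sub_mul, Matrix.mul_sub, trace_sub, Matrix.mul_assoc, hsymm]
  ring

theorem trace_quadratic_le_of_mul_eq {B : Matrix n n ℝ} (hB : B.PosSemidef)
    {Z R : Matrix n m ℝ} (hZ : B * Z = R) (Y : Matrix n m ℝ) :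
    (Zᵀ * B * Z).trace - 2 * (Zᵀ * R).trace ≤ (Yᵀ * B * Y).trace - 2 * (Yᵀ * R).trace := by
  subst hZ
  have hsq := trace_sub_transpose_mul_mul_sub (isHermitian_iff_isSymm.mp hB.isHermitian) Y Z
  have hnonneg := trace_transpose_mul_mul_nonneg hB (Y - Z)
  rw [← Matrix.mul_assoc Zᵀ]
  linarith

end Matrix

theorem trace_add_smul_sq_frobNorm {p k n : ℕ} (A : Matrix (Fin k) (Fin k) ℝ)
    (C : Matrix (Fin p) (Fin k) ℝ) (X : Matrix (Fin p) (Fin n) ℝ) (Y : Matrix (Fin k) (Fin n) ℝ)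
    (c : ℝ) :
    (Yᵀ * A * Y).trace + c * frobNorm (X - C * Y) ^ 2
      = (Yᵀ * (A + c • (Cᵀ * C)) * Y).trace - 2 * (Yᵀ * (c • (Cᵀ * X))).trace
        + c * (Xᵀ * X).trace := by
  have hcross : (Xᵀ * (C * Y)).trace = (Yᵀ * (Cᵀ * X)).trace := by
    rw [← trace_transpose, transpose_mul, transpose_mul, transpose_transpose, Matrix.mul_assoc]
  simp only [sq_frobNorm, transpose_sub, transpose_mul, Matrix.sub_mul, Matrix.mul_sub,
    Matrix.mul_add, Matrix.add_mul, trace_sub, trace_add, Matrix.mul_smul, Matrix.smul_mul,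
    trace_smul, smul_eq_mul, hcross, Matrix.mul_assoc]
  ring

/-- closed-form update rule for the coarsened features `X_C`:
`((2/α)·CᵀΘC + CᵀC)` is invertible and `X_C* = ((2/α)·CᵀΘC + CᵀC)⁻¹CᵀX` globally
minimizes `f(X̃) = tr(X̃ᵀCᵀΘCX̃) + (α/2)·‖X − CX̃‖_F²`. -/
theorem XC_update_global_min (p k n : ℕ)
    (Θ : Matrix (Fin p) (Fin p) ℝ) (hΘ : Θ.PosSemidef)
    (α : ℝ) (hα : 0 < α) (X : Matrix (Fin p) (Fin n) ℝ)
    (C : Matrix (Fin p) (Fin k) ℝ) (hC : IsUnit (Cᵀ * C)) :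
    IsUnit ((2 / α) • (Cᵀ * Θ * C) + Cᵀ * C) ∧
      ∀ Xt : Matrix (Fin k) (Fin n) ℝ,
        (((((2 / α) • (Cᵀ * Θ * C) + Cᵀ * C)⁻¹ * Cᵀ * X)ᵀ * (Cᵀ * Θ * C) *
            (((2 / α) • (Cᵀ * Θ * C) + Cᵀ * C)⁻¹ * Cᵀ * X)).trace
          + α / 2 * frobNorm (X - C * (((2 / α) • (Cᵀ * Θ * C) + Cᵀ * C)⁻¹ * Cᵀ * X)) ^ 2)
        ≤ (Xtᵀ * (Cᵀ * Θ * C) * Xt).trace + α / 2 * frobNorm (X - C * Xt) ^ 2 := by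
  set B := (2 / α) • (Cᵀ * Θ * C) + Cᵀ * C
  have hB : B.PosDef := PosDef.posSemidef_add
    ((hΘ.conjTranspose_mul_mul_same C).smul (a := 2 / α) (by positivity))
    (posDef_transpose_mul_self_of_isUnit hC)
  refine ⟨hB.isUnit, fun Xt => ?_⟩
  have hscale : Cᵀ * Θ * C + (α / 2) • (Cᵀ * C) = (α / 2) • B := by
    rw [smul_add, smul_smul, div_mul_div_comm, mul_comm α 2, div_self (by positivity), one_smul]
  have hnormal : ((α / 2) • B) * (B⁻¹ * Cᵀ * X) = (α / 2) • (Cᵀ * X) := by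
    rw [smul_mul, Matrix.mul_assoc,
      mul_nonsing_inv_cancel_left B _ ((isUnit_iff_isUnit_det B).mp hB.isUnit)]
  rw [trace_add_smul_sq_frobNorm, trace_add_smul_sq_frobNorm, hscale]
  linarith [trace_quadratic_le_of_mul_eq (hB.posSemidef.smul (by positivity)) hnormal Xt]
end

section
/- Let Z ∈ ℝ^{k×k} be symmetric positive definite. Then: (i) for every b ≠ 0, ‖(1/b)·Z − I‖_F² = tr(Z²)/b² − 2·tr(Z)/b + k; and (ii) there exists b > 0 such that ‖(1/b)·Z − I‖_F < 1 if and only if (tr(Z))² > (k−1)·tr(Z²). -/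
/-!
For symmetric `Z`, `‖c • Z - 1‖_F² = c² tr(Z²) - 2c tr Z + k` is a quadratic in `c = 1/b`. Positive
definiteness makes both `tr(Z²)` and `tr Z` positive, so the quadratic takes a value below `1` at some
`c > 0` iff it does at its minimiser `c = tr Z / tr(Z²)`, where it equals `k - (tr Z)² / tr(Z²)`.
-/

open Matrix

lemma frobNorm_nonneg {m n : ℕ} (A : Matrix (Fin m) (Fin n) ℝ) : 0 ≤ frobNorm A :=
  Real.sqrt_nonneg _

lemma frobNorm_sq_eq_trace_mul_transpose {m n : ℕ} (A : Matrix (Fin m) (Fin n) ℝ) :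
    frobNorm A ^ 2 = (A * Aᵀ).trace := by
  rw [frobNorm, Real.sq_sqrt (by positivity)]
  simp [trace, mul_apply, sq]

lemma frobNorm_smul_sub_one_sq {k : ℕ} {Z : Matrix (Fin k) (Fin k) ℝ} (hZ : Z.IsSymm) (c : ℝ) :
    frobNorm (c • Z - 1) ^ 2 = c ^ 2 * (Z * Z).trace - 2 * c * Z.trace + k := by
  rw [frobNorm_sq_eq_trace_mul_transpose, transpose_sub, transpose_smul, hZ.eq, transpose_one]
  simp only [sub_mul, mul_sub, smul_mul_assoc, mul_smul_comm, mul_one, one_mul, trace_sub,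
    trace_smul, trace_one, Fintype.card_fin, smul_eq_mul]
  ring

lemma Matrix.PosDef.trace_mul_self_pos {n R : Type*} [Fintype n] [Nonempty n] [Ring R]
    [PartialOrder R] [StarRing R] [StarOrderedRing R] [NoZeroDivisors R] [Nontrivial R]
    {Z : Matrix n n R} (hZ : Z.PosDef) : 0 < (Z * Z).trace := by
  nth_rewrite 1 [← hZ.isHermitian.eq]
  refine (posSemidef_conjTranspose_mul_self Z).trace_nonneg.lt_of_ne' ?_
  rw [Ne, trace_conjTranspose_mul_self_eq_zero_iff]
  rintro rfl
  simpa using hZ.trace_pos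

section OrderedField

variable {K : Type*} [Field K] [LinearOrder K] [IsStrictOrderedRing K]

lemma exists_pos_quadratic_neg_iff {a b c : K} (ha : 0 < a) (hb : 0 < b) :
    (∃ x, 0 < x ∧ a * x ^ 2 - 2 * b * x + c < 0) ↔ a * c < b ^ 2 := by
  constructor
  · rintro ⟨x, -, hx⟩
    nlinarith [sq_nonneg (a * x - b)]
  · intro h
    refine ⟨b / a, div_pos hb ha, ?_⟩
    have hmin : a * (b / a) ^ 2 - 2 * b * (b / a) + c = (a * c - b ^ 2) / a := by
      field_simp
      ring
    rw [hmin]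
    exact div_neg_of_neg_of_pos (by linarith) ha

lemma exists_pos_one_div_iff {p : K → Prop} :
    (∃ b, 0 < b ∧ p (1 / b)) ↔ ∃ x, 0 < x ∧ p x :=
  ⟨fun ⟨b, hb, h⟩ => ⟨1 / b, by positivity, h⟩,
    fun ⟨x, hx, h⟩ => ⟨1 / x, by positivity, by rwa [one_div_one_div]⟩⟩

end OrderedField

/-- for `Z` symmetric positive definite:
(i) `‖Z/b − I‖_F² = tr(Z²)/b² − 2tr(Z)/b + k` for every `b ≠ 0`, and
(ii) there exists `b > 0` with `‖Z/b − I‖_F < 1` iff `tr(Z)² > (k−1)·tr(Z²)`. -/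
theorem logdet_linearization_scale (k : ℕ) (hk : 0 < k)
    (Z : Matrix (Fin k) (Fin k) ℝ) (hZ : Z.PosDef) :
    (∀ b : ℝ, b ≠ 0 →
      frobNorm ((1 / b) • Z - 1) ^ 2
        = (Z * Z).trace / b ^ 2 - 2 * Z.trace / b + k) ∧
    ((∃ b : ℝ, 0 < b ∧ frobNorm ((1 / b) • Z - 1) < 1) ↔
      Z.trace ^ 2 > ((k : ℝ) - 1) * (Z * Z).trace) := by
  have hsymm : Z.IsSymm := isHermitian_iff_isSymm.mp hZ.isHermitian
  have : Nonempty (Fin k) := Fin.pos_iff_nonempty.mp hk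
  refine ⟨fun b _ => by rw [frobNorm_smul_sub_one_sq hsymm]; ring, ?_⟩
  have hlt_one (c : ℝ) : frobNorm (c • Z - 1) < 1 ↔
      (Z * Z).trace * c ^ 2 - 2 * Z.trace * c + ((k : ℝ) - 1) < 0 := by
    rw [← sq_lt_one_iff₀ (frobNorm_nonneg _), frobNorm_smul_sub_one_sq hsymm]
    constructor <;> intro h <;> linarith
  rw [exists_pos_one_div_iff (p := fun c => frobNorm (c • Z - 1) < 1)]
  simp only [hlt_one]
  rw [exists_pos_quadratic_neg_iff hZ.trace_mul_self_pos hZ.trace_pos, gt_iff_lt, mul_comm]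
end
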